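/- Let p be an odd prime, N ∈ {1, 2, 4, 5}, and θ = 2Np + 1 a prime. If θ satisfies Condition 2-N-p for p, then θ satisfies Condition N-C for p; that is, there are no two nonzero consecutive p-th power residues modulo θ. -/

import Mathlib

/-!
Modulo the prime `θ = 2Np + 1` every nonzero `p`-th power `u` satisfies `u ^ (2N) = 1`.
If `u` and `u + 1` are both such powers, eliminating `u` between `u ^ (2N) = 1` and
`(u + 1) ^ (2N) = 1` gives `2 ^ (2N) = 1` for `N ∈ {1, 2, 4, 5}`. Since the unit group
is cyclic of order `p * 2N`, an element killed by `2N` is a `p`-th power, so `2` would be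
a `p`-th power residue.
-/

theorem IsCyclic.exists_pow_eq_of_pow_eq_one {G : Type*} [Group G] [IsCyclic G] [Finite G]
    {d m : ℕ} (hcard : Nat.card G = d * m) {x : G} (hx : x ^ m = 1) : ∃ y : G, y ^ d = x := by
  obtain ⟨g, hg⟩ := IsCyclic.exists_generator (α := G)
  obtain ⟨k, rfl⟩ : ∃ k : ℕ, g ^ k = x := mem_powers_iff_mem_zpowers.mpr (hg x)
  have hm : m ≠ 0 := by
    rintro rfl
    exact Nat.card_pos.ne' (by simpa using hcard)
  have hdvd : d * m ∣ k * m := by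
    rw [← hcard, ← orderOf_eq_card_of_forall_mem_zpowers hg]
    exact orderOf_dvd_of_pow_eq_one (by rwa [← pow_mul] at hx)
  obtain ⟨j, rfl⟩ := Nat.dvd_of_mul_dvd_mul_right (Nat.pos_of_ne_zero hm) hdvd
  exact ⟨g ^ j, by rw [← pow_mul, mul_comm]⟩

namespace FiniteField

variable {K : Type*} [Field K] [Fintype K] {d m : ℕ}

theorem pow_pow_eq_one_of_card_eq (hcard : Fintype.card K = d * m + 1) {x : K} (hx : x ≠ 0) :
    (x ^ d) ^ m = 1 := by
  rw [← pow_mul, ← Nat.add_sub_cancel (d * m) 1, ← hcard]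
  exact pow_card_sub_one_eq_one x hx

theorem exists_pow_eq_of_pow_eq_one (hcard : Fintype.card K = d * m + 1) {x : K}
    (hx : x ^ m = 1) : ∃ y : K, y ^ d = x := by
  have hm : m ≠ 0 := by
    rintro rfl
    exact Fintype.one_lt_card.ne' (by simpa using hcard)
  have hunits : Nat.card Kˣ = d * m := by
    rw [Nat.card_units, Nat.card_eq_fintype_card, hcard, Nat.add_sub_cancel]
  obtain ⟨y, hy⟩ := IsCyclic.exists_pow_eq_of_pow_eq_one hunits (Units.pow_ofPowEqOne hx hm)
  exact ⟨y, by rw [← Units.val_pow_eq_pow_val, hy, Units.val_ofPowEqOne]⟩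

end FiniteField

/- The certificates are Bezout identities in `ℤ[u]` exhibiting `2 ^ (2N) - 1` in the ideal
`(u ^ (2N) - 1, (u + 1) ^ (2N) - 1)`. For `N = 3` there is none: `u = e^(2πi/3)` is a
common complex root. -/
theorem two_pow_eq_one_of_pow_eq_one_of_add_one_pow_eq_one {R : Type*} [CommRing R] {N : ℕ}
    (hN : N = 1 ∨ N = 2 ∨ N = 4 ∨ N = 5) {u : R} (hu : u ^ (2 * N) = 1)
    (hu₁ : (u + 1) ^ (2 * N) = 1) : (2 : R) ^ (2 * N) = 1 := by
  rcases hN with rfl | rfl | rfl | rfl <;> norm_num at hu hu₁ ⊢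
  · linear_combination (-3 - 2 * u) * hu + (-1 + 2 * u) * hu₁
  · linear_combination (-15 - 20 * u - 14 * u ^ 2 - 4 * u ^ 3) * hu +
      (-5 + 4 * u - 2 * u ^ 2 + 4 * u ^ 3) * hu₁
  · linear_combination
      (-255 - 680 * u - 1804 * u ^ 2 - 3032 * u ^ 3 - 2990 * u ^ 4 - 1720 * u ^ 5
        - 540 * u ^ 6 - 72 * u ^ 7) * hu +
      (-85 + 72 * u - 36 * u ^ 2 - 8 * u ^ 3 + 30 * u ^ 4 - 8 * u ^ 5 - 36 * u ^ 6
        + 72 * u ^ 7) * hu₁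
  · linear_combination
      (-1023 - 3410 * u - 12545 * u ^ 2 - 29720 * u ^ 3 - 44210 * u ^ 4 - 42932 * u ^ 5
        - 27455 * u ^ 6 - 11210 * u ^ 7 - 2660 * u ^ 8 - 280 * u ^ 9) * hu +
      (-341 + 280 * u - 140 * u ^ 2 + 10 * u ^ 3 + 55 * u ^ 4 - 68 * u ^ 5 + 55 * u ^ 6
        + 10 * u ^ 7 - 140 * u ^ 8 + 280 * u ^ 9) * hu₁

theorem NC_for_small_N_general
    (p N : ℕ)
    (hNval : N = 1 ∨ N = 2 ∨ N = 4 ∨ N = 5)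
    (hθ : (2 * N * p + 1).Prime)
    (h2Np : ¬ ∃ c : ℤ, c ^ p ≡ 2 [ZMOD ((2 * N * p + 1 : ℕ) : ℤ)]) :
    ¬ ∃ a b : ℤ, ¬ ((2 * N * p + 1 : ℕ) : ℤ) ∣ a ∧ ¬ ((2 * N * p + 1 : ℕ) : ℤ) ∣ b ∧
      b ^ p ≡ a ^ p + 1 [ZMOD ((2 * N * p + 1 : ℕ) : ℤ)] := by
  rintro ⟨a, b, ha, hb, hab⟩
  have := Fact.mk hθ
  have hcard : Fintype.card (ZMod (2 * N * p + 1)) = p * (2 * N) + 1 := by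
    rw [ZMod.card]; ring
  have ha₀ : (a : ZMod (2 * N * p + 1)) ≠ 0 := by rwa [Ne, ZMod.intCast_zmod_eq_zero_iff_dvd]
  have hb₀ : (b : ZMod (2 * N * p + 1)) ≠ 0 := by rwa [Ne, ZMod.intCast_zmod_eq_zero_iff_dvd]
  have hab' : (b : ZMod (2 * N * p + 1)) ^ p = (a : ZMod (2 * N * p + 1)) ^ p + 1 := by
    exact_mod_cast (ZMod.intCast_eq_intCast_iff _ _ _).mpr hab
  have h2 : (2 : ZMod (2 * N * p + 1)) ^ (2 * N) = 1 :=
    two_pow_eq_one_of_pow_eq_one_of_add_one_pow_eq_one hNval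
      (FiniteField.pow_pow_eq_one_of_card_eq hcard ha₀)
      (hab' ▸ FiniteField.pow_pow_eq_one_of_card_eq hcard hb₀)
  obtain ⟨y, hy⟩ := FiniteField.exists_pow_eq_of_pow_eq_one hcard h2
  refine h2Np ⟨y.cast, ?_⟩
  rw [← ZMod.intCast_eq_intCast_iff]
  push_cast
  exact hy

/-- For N ∈ {1, 2, 4, 5} and θ = 2Np + 1 prime: if 2 is not a p-th power
residue modulo θ (Condition 2-N-p), then there are no two nonzero consecutive
p-th power residues modulo θ (Condition N-C). -/
theorem NC_for_small_N
    (p N : ℕ) (hp : p.Prime) (hpodd : Odd p)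
    (hNval : N = 1 ∨ N = 2 ∨ N = 4 ∨ N = 5)
    (hθ : (2 * N * p + 1).Prime)
    (h2Np : ¬ ∃ c : ℤ, c ^ p ≡ 2 [ZMOD ((2 * N * p + 1 : ℕ) : ℤ)]) :
    ¬ ∃ a b : ℤ, ¬ ((2 * N * p + 1 : ℕ) : ℤ) ∣ a ∧ ¬ ((2 * N * p + 1 : ℕ) : ℤ) ∣ b ∧
      b ^ p ≡ a ^ p + 1 [ZMOD ((2 * N * p + 1 : ℕ) : ℤ)] :=
  NC_for_small_N_general p N hNval hθ h2Np
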